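/- arXiv:1910.10954 — 2 statements merged into one kernel-verified Lean document; each statement's English description precedes it below -/
import Mathlib

section
/- For θ ∈ [0, π/4], δ ∈ [0,1], ε ∈ [0,1], the function g(z) = max{ max(1-δ-2z, |z sin 2θ|), (1-ε)(1-δ) + ε·max(1-δ-2z, |z sin 2θ|) } attains, over all z with 0 ≤ 1-δ-2z ≤ 1, its minimum value (1-δ)(1 - ε/(1 + sin θ cos θ)) at z* = (1-δ)/(2 + sin 2θ). -/
theorem stmt_5 (θ δ ε : ℝ) (hθ : θ ∈ Set.Icc 0 (Real.pi / 4))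
    (hδ : δ ∈ Set.Icc (0 : ℝ) 1) (hε : ε ∈ Set.Icc (0 : ℝ) 1) :
    let g : ℝ → ℝ := fun z =>
      max (max (1 - δ - 2 * z) |z * Real.sin (2 * θ)|)
        ((1 - ε) * (1 - δ) + ε * max (1 - δ - 2 * z) |z * Real.sin (2 * θ)|)
    let zstar : ℝ := (1 - δ) / (2 + Real.sin (2 * θ))
    (0 ≤ 1 - δ - 2 * zstar ∧ 1 - δ - 2 * zstar ≤ 1) ∧
    g zstar = (1 - δ) * (1 - ε / (1 + Real.sin θ * Real.cos θ)) ∧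
    ∀ z : ℝ, 0 ≤ 1 - δ - 2 * z → 1 - δ - 2 * z ≤ 1 →
      (1 - δ) * (1 - ε / (1 + Real.sin θ * Real.cos θ)) ≤ g z := by
  obtain ⟨hθ0, hθ1⟩ := hθ
  obtain ⟨hδ0, hδ1⟩ := hδ
  obtain ⟨hε0, hε1⟩ := hε
  intro g zstar
  have hpi : (0:ℝ) < Real.pi := Real.pi_pos
  have hs0 : 0 ≤ Real.sin (2*θ) :=
    Real.sin_nonneg_of_nonneg_of_le_pi (by linarith) (by linarith)
  have hs1 : Real.sin (2*θ) ≤ 1 := Real.sin_le_one _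
  set s := Real.sin (2*θ) with hs
  have h2s : (0:ℝ) < 2 + s := by linarith
  have h2s' : (2:ℝ) + s ≠ 0 := ne_of_gt h2s
  have hzs : zstar = (1-δ)/(2+s) := rfl
  have hz0 : 0 ≤ zstar := div_nonneg (by linarith) h2s.le
  have hkey : 1 - δ - 2*zstar = (1-δ)*s/(2+s) := by
    rw [hzs]; field_simp; ring
  have hm0 : 0 ≤ (1-δ)*s/(2+s) := div_nonneg (mul_nonneg (by linarith) hs0) h2s.le
  have hmle : (1-δ)*s/(2+s) ≤ 1 - δ := by
    rw [div_le_iff₀ h2s]; nlinarith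
  have habs : |zstar * s| = (1-δ)*s/(2+s) := by
    rw [abs_of_nonneg (mul_nonneg hz0 hs0), hzs]; ring
  have hsc : Real.sin θ * Real.cos θ = s/2 := by
    rw [hs, Real.sin_two_mul]; ring
  have hden : (1:ℝ) + s/2 ≠ 0 := by positivity
  have htar : (1-δ)*(1 - ε/(1 + Real.sin θ * Real.cos θ))
      = (1-ε)*(1-δ) + ε*((1-δ)*s/(2+s)) := by
    rw [hsc]; field_simp; ring
  refine ⟨⟨by rw [hkey]; exact hm0, by rw [hkey]; linarith⟩, ?_, ?_⟩
  · show max (max (1-δ-2*zstar) |zstar*s|) _ = _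
    rw [hkey, habs, max_self, htar]
    exact max_eq_right (by nlinarith)
  · intro z h1 h2
    have hinner : (1-δ)*s/(2+s) ≤ max (1-δ-2*z) |z*s| := by
      rcases le_total z zstar with h | h
      · exact le_max_of_le_left (by rw [← hkey]; linarith)
      · refine le_max_of_le_right ?_
        rw [abs_of_nonneg (mul_nonneg (hz0.trans h) hs0)]
        calc (1-δ)*s/(2+s) = zstar * s := by rw [hzs]; ring
          _ ≤ z * s := mul_le_mul_of_nonneg_right h hs0
    calc (1-δ)*(1 - ε/(1+Real.sin θ*Real.cos θ))
        = (1-ε)*(1-δ) + ε*((1-δ)*s/(2+s)) := htar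
      _ ≤ (1-ε)*(1-δ) + ε*(max (1-δ-2*z) |z*s|) := by
          nlinarith [mul_le_mul_of_nonneg_left hinner hε0]
      _ ≤ g z := le_max_right _ _
end

section
/- For θ ∈ (0, π/4] and δ ∈ [0,1), every pair (x,z) ∈ ℝ² satisfying the three constraints 1-δ-z-√(x²+z²) ≥ 0, 1-δ-z+√(x²+z²) ≤ 1, and 1-δ-2z ≤ |x cos 2θ + z sin 2θ| satisfies |x cos 2θ + z sin 2θ| > 0. (Equivalently, the optimal worst-case type-II error at ε = 1 is strictly positive for entangled states under separable measurements.) -/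
theorem stmt_13 (θ δ : ℝ) (hθ : θ ∈ Set.Ioc 0 (Real.pi / 4))
    (hδ : δ ∈ Set.Ico (0 : ℝ) 1) :
    ∀ x z : ℝ,
      1 - δ - z - Real.sqrt (x ^ 2 + z ^ 2) ≥ 0 →
      1 - δ - z + Real.sqrt (x ^ 2 + z ^ 2) ≤ 1 →
      1 - δ - 2 * z ≤ |x * Real.cos (2 * θ) + z * Real.sin (2 * θ)| →
      0 < |x * Real.cos (2 * θ) + z * Real.sin (2 * θ)| := by
  intro x z h1 h2 h3
  by_contra hc
  push_neg at hc
  have habs : |x * Real.cos (2 * θ) + z * Real.sin (2 * θ)| = 0 :=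
    le_antisymm hc (abs_nonneg _)
  rw [habs] at h3
  -- z ≥ (1-δ)/2 > 0
  have hz : (1 - δ) / 2 ≤ z := by linarith
  have hzpos : 0 < z := by
    have := hδ.2; linarith
  -- z ≤ √(x²+z²)
  have hs : z ≤ Real.sqrt (x ^ 2 + z ^ 2) := by
    rw [Real.le_sqrt hzpos.le]
    · nlinarith [sq_nonneg x]
    · positivity
  -- combined with h1 : z ≤ (1-δ)/2
  have hz2 : z = (1 - δ) / 2 := by linarith
  have hseq : Real.sqrt (x ^ 2 + z ^ 2) = z := by linarith
  have hx : x = 0 := by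
    have h := Real.sq_sqrt (by positivity : (0:ℝ) ≤ x ^ 2 + z ^ 2)
    rw [hseq] at h
    nlinarith [sq_nonneg x]
  have hsin : 0 < Real.sin (2 * θ) := by
    apply Real.sin_pos_of_pos_of_lt_pi
    · linarith [hθ.1]
    · have := hθ.2
      have := Real.pi_pos
      linarith
  rw [hx] at habs
  simp [abs_eq_zero] at habs
  rcases habs with h | h
  · linarith
  · linarith
end
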